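/- arXiv:2402.07968 — 3 statements merged into one kernel-verified Lean document; each statement's English description precedes it below -/
import Mathlib

section
/- For any graph H, the join K_2 ∨ H has total Roman {2}-domination number equal to 2. Conversely, if a nontrivial connected graph G satisfies γ_{tR2}(G) = 2, then G contains two adjacent vertices x, y such that every other vertex of G is adjacent to both x and y (i.e., G = K_2 ∨ H for some graph H). -/
/-- `f` is a total Roman {2}-dominating function on `G`. -/
def IsTR2DF {V : Type*} (G : SimpleGraph V) (f : V → ℕ) : Prop :=
  (∀ v, f v ≤ 2) ∧
  (∀ v, f v = 0 →
    (∃ u, G.Adj u v ∧ f u = 2) ∨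
    (∃ x y, x ≠ y ∧ G.Adj x v ∧ G.Adj y v ∧ f x = 1 ∧ f y = 1)) ∧
  (∀ v, 0 < f v → ∃ u, G.Adj u v ∧ 0 < f u)

/-- The total Roman {2}-domination number of `G`. -/
noncomputable def tR2 {V : Type*} [Fintype V] (G : SimpleGraph V) : ℕ :=
  sInf {w | ∃ f : V → ℕ, IsTR2DF G f ∧ ∑ v, f v = w}

/-!
A TR2DF has weight at least 2, since some vertex is positive and so is one of its neighbours.
Weight exactly 2 therefore forces the positive vertices to be two adjacent vertices `x`, `y` of
value 1; every other vertex has value 0 and no neighbour of value 2, so it must be adjacent to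
both. Conversely, value 1 on such an edge `xy` and 0 elsewhere is a TR2DF of weight 2.
-/

theorem add_le_sum_of_ne {ι M : Type*} [Fintype ι] [AddCommMonoid M] [PartialOrder M]
    [CanonicallyOrderedAdd M] (f : ι → M) {i j : ι} (hij : i ≠ j) :
    f i + f j ≤ ∑ k, f k := by
  classical
  rw [← Finset.sum_pair hij]
  exact Finset.sum_le_sum_of_subset (Finset.subset_univ _)

namespace IsTR2DF

variable {V : Type*} [Fintype V] {G : SimpleGraph V} {f : V → ℕ}

theorem exists_pos [Nonempty V] (hf : IsTR2DF G f) : ∃ v, 0 < f v := by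
  by_contra! hzero
  obtain ⟨w⟩ := ‹Nonempty V›
  rcases hf.2.1 w (Nat.le_zero.mp (hzero w)) with ⟨u, -, hu⟩ | ⟨a, -, -, -, -, ha, -⟩
  · exact absurd (hzero u) (by omega)
  · exact absurd (hzero a) (by omega)

theorem two_le_sum [Nonempty V] (hf : IsTR2DF G f) : 2 ≤ ∑ v, f v := by
  obtain ⟨v, hv⟩ := hf.exists_pos
  obtain ⟨u, huv, hu⟩ := hf.2.2 v hv
  have := add_le_sum_of_ne f (G.ne_of_adj huv)
  omega

theorem exists_adj_pair_of_sum_eq_two (hf : IsTR2DF G f) (hsum : ∑ v, f v = 2) :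
    ∃ x y : V, x ≠ y ∧ G.Adj x y ∧ ∀ z : V, z ≠ x → z ≠ y → G.Adj z x ∧ G.Adj z y := by
  classical
  obtain ⟨-, hdom, htot⟩ := hf
  obtain ⟨x, -, hx⟩ := Finset.exists_ne_zero_of_sum_ne_zero (hsum.trans_ne two_ne_zero)
  obtain ⟨y, hyx, hy⟩ := htot x (Nat.pos_of_ne_zero hx)
  have hxy : x ≠ y := (G.ne_of_adj hyx).symm
  have hxy_le := add_le_sum_of_ne f hxy
  have hrest : ∀ z, z ≠ x → z ≠ y → f z = 0 := by
    intro z hzx hzy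
    have : f z + (f x + f y) ≤ ∑ w, f w := by
      rw [← Finset.sum_pair hxy, ← Finset.sum_insert (by simp [hzx, hzy])]
      exact Finset.sum_le_sum_of_subset (Finset.subset_univ _)
    omega
  have hsupp : ∀ w, 0 < f w → w = x ∨ w = y := by
    intro w hw
    by_contra! hne
    exact absurd (hrest w hne.1 hne.2) hw.ne'
  refine ⟨x, y, hxy, hyx.symm, fun z hzx hzy => ?_⟩
  rcases hdom z (hrest z hzx hzy) with ⟨u, -, hu⟩ | ⟨a, b, hab, haz, hbz, ha, hb⟩
  · rcases hsupp u (by omega) with rfl | rfl <;> omega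
  · rcases hsupp a (by omega) with rfl | rfl <;> rcases hsupp b (by omega) with rfl | rfl
    · exact absurd rfl hab
    · exact ⟨haz.symm, hbz.symm⟩
    · exact ⟨hbz.symm, haz.symm⟩
    · exact absurd rfl hab

end IsTR2DF

theorem exists_isTR2DF_sum_eq_two {V : Type*} [Fintype V] {G : SimpleGraph V} {x y : V}
    (hxy : x ≠ y) (hadj : G.Adj x y) (hall : ∀ z : V, z ≠ x → z ≠ y → G.Adj z x ∧ G.Adj z y) :
    ∃ f : V → ℕ, IsTR2DF G f ∧ ∑ v, f v = 2 := by
  classical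
  refine ⟨fun v => if v ∈ ({x, y} : Finset V) then 1 else 0, ⟨?_, ?_, ?_⟩, ?_⟩
  · intro v
    dsimp only
    split_ifs <;> omega
  · intro z hz
    have hzx : z ≠ x := by rintro rfl; simp at hz
    have hzy : z ≠ y := by rintro rfl; simp at hz
    obtain ⟨hzx', hzy'⟩ := hall z hzx hzy
    exact Or.inr ⟨x, y, hxy, hzx'.symm, hzy'.symm, by simp, by simp⟩
  · intro v hv
    have hv' : v ∈ ({x, y} : Finset V) := by
      by_contra hvxy
      simp only [if_neg hvxy, lt_irrefl] at hv
    rcases Finset.mem_insert.mp hv' with rfl | hvy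
    · exact ⟨y, hadj.symm, by simp⟩
    · obtain rfl := Finset.mem_singleton.mp hvy
      exact ⟨x, hadj, by simp⟩
  · rw [Finset.sum_ite_mem, Finset.univ_inter, Finset.sum_const, Finset.card_pair hxy]
    rfl

section tR2

variable {V : Type*} [Fintype V] {G : SimpleGraph V}

theorem tR2_le {f : V → ℕ} (hf : IsTR2DF G f) : tR2 G ≤ ∑ v, f v :=
  Nat.sInf_le ⟨f, hf, rfl⟩

theorem exists_isTR2DF_sum_eq_tR2 (h : tR2 G ≠ 0) :
    ∃ f : V → ℕ, IsTR2DF G f ∧ ∑ v, f v = tR2 G :=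
  Nat.sInf_mem (Nat.nonempty_of_pos_sInf (Nat.pos_of_ne_zero h))

theorem two_le_tR2 [Nonempty V] {f : V → ℕ} (hf : IsTR2DF G f) : 2 ≤ tR2 G := by
  obtain ⟨g, hg, hsum⟩ : ∃ g : V → ℕ, IsTR2DF G g ∧ ∑ v, g v = tR2 G :=
    Nat.sInf_mem (s := {w | ∃ g : V → ℕ, IsTR2DF G g ∧ ∑ v, g v = w}) ⟨_, f, hf, rfl⟩
  exact hsum ▸ hg.two_le_sum

end tR2

theorem stmt8_general {V : Type*} [Fintype V] (G : SimpleGraph V) :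
    tR2 G = 2 ↔ ∃ x y : V, x ≠ y ∧ G.Adj x y ∧
      ∀ z : V, z ≠ x → z ≠ y → G.Adj z x ∧ G.Adj z y := by
  constructor
  · intro h
    obtain ⟨f, hf, hsum⟩ := exists_isTR2DF_sum_eq_tR2 (G := G) (by omega)
    exact hf.exists_adj_pair_of_sum_eq_two (hsum.trans h)
  · rintro ⟨x, y, hxy, hadj, hall⟩
    have : Nonempty V := ⟨x⟩
    obtain ⟨f, hf, hsum⟩ := exists_isTR2DF_sum_eq_two hxy hadj hall
    exact le_antisymm (hsum ▸ tR2_le hf) (two_le_tR2 hf)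

theorem stmt8 {V : Type*} [Fintype V] (G : SimpleGraph V)
    (hconn : G.Connected) (hnt : Nontrivial V) :
    tR2 G = 2 ↔ ∃ x y : V, x ≠ y ∧ G.Adj x y ∧
      ∀ z : V, z ≠ x → z ≠ y → G.Adj z x ∧ G.Adj z y :=
  stmt8_general G
end

section
/- Let G be a nontrivial connected graph of order n with maximum degree Δ. If γ_{tR2}(G) = 2n/(Δ+1), then every minimum-weight total Roman {2}-dominating function f = (V_0, V_1, V_2) on G has V_2 = ∅. -/
/-!
Every vertex `x` sees weight at least `2` in its closed neighbourhood under a TR2DF `f`, and at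
least `3` when `f x = 2`, because the total condition gives `x` a neighbour of positive weight.
Summing over `x` counts each `f u` once for `u` itself and once per neighbour, so
`2 n + |V₂| ≤ w(f) (Δ + 1)`, and equality `w(f) (Δ + 1) = 2 n` forces `V₂ = ∅`.
-/

namespace SimpleGraph

variable {V : Type*} [Fintype V] (G : SimpleGraph V) [DecidableRel G.Adj]

theorem sum_sum_neighborFinset_eq_sum_degree_smul {M : Type*} [AddCommMonoid M] (f : V → M) :
    ∑ x, ∑ u ∈ G.neighborFinset x, f u = ∑ u, G.degree u • f u := by
  rw [Finset.sum_comm' (t' := Finset.univ) (s' := fun u => G.neighborFinset u)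
    (fun x u => by simp [adj_comm])]
  simp [Finset.sum_const, card_neighborFinset_eq_degree]

theorem sum_closedNbhd_sum_le_mul_maxDegree_add_one (f : V → ℕ) :
    ∑ x, (f x + ∑ u ∈ G.neighborFinset x, f u) ≤ (∑ v, f v) * (G.maxDegree + 1) := by
  rw [Finset.sum_add_distrib, G.sum_sum_neighborFinset_eq_sum_degree_smul, mul_add_one,
    add_comm, Finset.sum_mul]
  gcongr with u
  rw [smul_eq_mul, mul_comm]
  exact Nat.mul_le_mul_left _ (G.degree_le_maxDegree u)

end SimpleGraph

namespace IsTR2DF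

open Finset SimpleGraph

variable {V : Type*} {G : SimpleGraph V} [Fintype V] [DecidableRel G.Adj] {f : V → ℕ}

theorem two_le_sum_neighborFinset_of_eq_zero (hf : IsTR2DF G f) {x : V} (hx : f x = 0) :
    2 ≤ ∑ u ∈ G.neighborFinset x, f u := by
  classical
  rcases hf.2.1 x hx with ⟨u, hux, hu⟩ | ⟨a, b, hab, hax, hbx, ha, hb⟩
  · rw [← hu]
    exact Finset.single_le_sum (fun _ _ => Nat.zero_le _) ((mem_neighborFinset ..).2 hux.symm)
  · have hsub : {a, b} ⊆ G.neighborFinset x := by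
      simp [Finset.insert_subset_iff, hax.symm, hbx.symm]
    calc 2 = ∑ u ∈ {a, b}, f u := by rw [Finset.sum_pair hab, ha, hb]
      _ ≤ _ := Finset.sum_le_sum_of_subset hsub

theorem one_le_sum_neighborFinset_of_pos (hf : IsTR2DF G f) {x : V} (hx : 0 < f x) :
    1 ≤ ∑ u ∈ G.neighborFinset x, f u := by
  obtain ⟨u, hux, hu⟩ := hf.2.2 x hx
  exact hu.trans_le
    (Finset.single_le_sum (fun _ _ => Nat.zero_le _) ((mem_neighborFinset ..).2 hux.symm))

theorem two_add_ite_le_closedNbhd_sum (hf : IsTR2DF G f) (x : V) :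
    2 + (if f x = 2 then 1 else 0) ≤ f x + ∑ u ∈ G.neighborFinset x, f u := by
  rcases Nat.eq_zero_or_pos (f x) with hx | hx
  · have := hf.two_le_sum_neighborFinset_of_eq_zero hx
    simp [hx, this]
  · have := hf.one_le_sum_neighborFinset_of_pos hx
    have := hf.1 x
    split <;> omega

theorem two_mul_card_add_card_eq_two_le (hf : IsTR2DF G f) :
    2 * Fintype.card V + #{v | f v = 2} ≤ (∑ v, f v) * (G.maxDegree + 1) :=
  calc 2 * Fintype.card V + #{v | f v = 2} = ∑ x, (2 + if f x = 2 then 1 else 0) := by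
        rw [Finset.sum_add_distrib, Finset.sum_boole, Finset.sum_const, Finset.card_univ,
          smul_eq_mul, mul_comm, Nat.cast_id]
    _ ≤ ∑ x, (f x + ∑ u ∈ G.neighborFinset x, f u) :=
        Finset.sum_le_sum fun x _ => hf.two_add_ite_le_closedNbhd_sum x
    _ ≤ (∑ v, f v) * (G.maxDegree + 1) := G.sum_closedNbhd_sum_le_mul_maxDegree_add_one f

end IsTR2DF

theorem stmt14_general {V : Type*} [Fintype V] (G : SimpleGraph V) [DecidableRel G.Adj]
    (heq : tR2 G * (G.maxDegree + 1) = 2 * Fintype.card V) :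
    ∀ f : V → ℕ, IsTR2DF G f → ∑ v, f v = tR2 G → ∀ v, f v ≠ 2 := by
  intro f hf hw v hv
  have hbound := hf.two_mul_card_add_card_eq_two_le
  rw [hw, heq] at hbound
  have hempty : (Finset.univ.filter fun x => f x = 2).card = 0 := by omega
  exact Finset.eq_empty_iff_forall_notMem.1 (Finset.card_eq_zero.1 hempty) v (by simpa using hv)

theorem stmt14 {V : Type*} [Fintype V] (G : SimpleGraph V) [DecidableRel G.Adj]
    (hconn : G.Connected) (hnt : Nontrivial V)
    (heq : tR2 G * (G.maxDegree + 1) = 2 * Fintype.card V) :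
    ∀ f : V → ℕ, IsTR2DF G f → ∑ v, f v = tR2 G → ∀ v, f v ≠ 2 :=
  stmt14_general G heq
end

section
/- If T is the tree obtained from a path v_1 v_2 … v_k (k ≥ 4) by adding a new pendant vertex w adjacent to v_{k−1}, then γ_{tR2}(T) < 2(k+3)/3. -/
open Finset

lemma tR2_le_sum {V : Type*} [Fintype V] {G : SimpleGraph V} {f : V → ℕ} (hf : IsTR2DF G f) :
    tR2 G ≤ ∑ v, f v :=
  Nat.sInf_le ⟨f, hf, rfl⟩

/-- Vertex `v_i` of the paper is `i - 1` here, and `w` is `k`. -/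
def pendantPath (k : ℕ) : SimpleGraph (Fin (k + 1)) :=
  SimpleGraph.fromRel fun i j => (i.val + 1 = j.val ∧ j.val < k) ∨ (i.val = k - 2 ∧ j.val = k)

lemma pendantPath_adj_iff {k : ℕ} (hk : 2 ≤ k) {i j : Fin (k + 1)} :
    (pendantPath k).Adj i j ↔
      (i.val + 1 = j.val ∧ j.val < k) ∨ (j.val + 1 = i.val ∧ i.val < k) ∨
        (i.val = k - 2 ∧ j.val = k) ∨ (j.val = k - 2 ∧ i.val = k) := by
  rw [pendantPath, SimpleGraph.fromRel_adj, ne_eq, Fin.ext_iff]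
  omega

lemma three_mul_sum_range_ite_mod_three (n : ℕ) :
    3 * ∑ i ∈ range n, (if i % 3 = 2 then 0 else 1) = 2 * n + n % 3 := by
  induction n with
  | zero => simp
  | succ n ih =>
    rw [sum_range_succ, Nat.mul_add, ih]
    split_ifs <;> omega

def pendantPathLabel (n i : ℕ) : ℕ :=
  if i < n then (if i % 3 = 2 then 0 else 1) else if i = n then 1 else if i = n + 1 then 2 else 0

lemma isTR2DF_pendantPathLabel (n : ℕ) :
    IsTR2DF (pendantPath (n + 3)) fun v => pendantPathLabel n v := by
  have adj : ∀ {i j : Fin (n + 3 + 1)}, (i.val + 1 = j.val ∧ j.val < n + 3) ∨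
      (j.val + 1 = i.val ∧ i.val < n + 3) ∨ (i.val = n + 1 ∧ j.val = n + 3) ∨
      (j.val = n + 1 ∧ i.val = n + 3) → (pendantPath (n + 3)).Adj i j :=
    fun h => (pendantPath_adj_iff (by omega)).2 (by omega)
  refine ⟨fun v => ?_, fun v hv => ?_, fun v hv => ?_⟩ <;>
    simp only [pendantPathLabel] at * <;> have hv_lt := v.isLt
  · split_ifs <;> omega
  · have hzero : v.val < n ∧ v.val % 3 = 2 ∨ n + 2 ≤ v.val := by split_ifs at hv <;> omega
    rcases hzero with hzero | hleaf
    · right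
      refine ⟨⟨v - 1, by omega⟩, ⟨v + 1, by omega⟩, Fin.ne_of_val_ne ?_, adj ?_, adj ?_, ?_, ?_⟩ <;>
        dsimp only <;> (try split_ifs) <;> omega
    · left
      exact ⟨⟨n + 1, by omega⟩, adj (by dsimp only; omega), by simp⟩
  · have hpos : v.val < n ∧ v.val % 3 ≠ 2 ∨ v.val = n ∨ v.val = n + 1 := by
      split_ifs at hv <;> omega
    by_cases hnext : v.val % 3 = 0 ∧ v.val < n ∨ v.val = n
    · exact ⟨⟨v + 1, by omega⟩, adj (by dsimp only; omega), by dsimp only; split_ifs <;> omega⟩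
    · exact ⟨⟨v - 1, by omega⟩, adj (by dsimp only; omega), by dsimp only; split_ifs <;> omega⟩

lemma three_mul_sum_pendantPathLabel (n : ℕ) :
    3 * ∑ v : Fin (n + 3 + 1), pendantPathLabel n v = 2 * n + n % 3 + 9 := by
  have hpattern : ∑ i ∈ range n, pendantPathLabel n i =
      ∑ i ∈ range n, (if i % 3 = 2 then 0 else 1) :=
    sum_congr rfl fun i hi => if_pos (mem_range.1 hi)
  rw [Fin.sum_univ_eq_sum_range (pendantPathLabel n), sum_range_succ, sum_range_succ,
    sum_range_succ, sum_range_succ, hpattern]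
  have htail : pendantPathLabel n n + pendantPathLabel n (n + 1) + pendantPathLabel n (n + 2) +
      pendantPathLabel n (n + 3) = 3 := by
    simp [pendantPathLabel]
  have := three_mul_sum_range_ite_mod_three n
  omega

theorem stmt18 (k : ℕ) (hk : 4 ≤ k)
    (T : SimpleGraph (Fin (k + 1)))
    (hT : T = SimpleGraph.fromRel (fun i j : Fin (k + 1) =>
      (i.val + 1 = j.val ∧ j.val < k) ∨ (i.val = k - 2 ∧ j.val = k))) :
    3 * tR2 T < 2 * (k + 3) := by
  obtain ⟨n, rfl⟩ : ∃ n, k = n + 3 := ⟨k - 3, by omega⟩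
  subst hT
  change 3 * tR2 (pendantPath (n + 3)) < _
  have hle := tR2_le_sum (isTR2DF_pendantPathLabel n)
  have hsum := three_mul_sum_pendantPathLabel n
  omega
end
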